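/- (Mixed associativity) For power series matrices M_φ, M_ψ, M_ξ of power series with zero constant terms, e^{⊙M_φ}(e^{⊙M_ψ} M_ξ) = e^{⊙(e^{⊙M_φ} M_ψ)} M_ξ, reflecting associativity of composition of formal power series maps. -/

import Mathlib

/-! Multi-index matrices and their symmetric product (Bekbaev). -/

/-- Multi-indices: `n`-tuples of nonnegative integers. -/
abbrev MultiIndex (n : ℕ) := Fin n →₀ ℕ

namespace SymProd

variable {n : ℕ} {R : Type*} [CommRing R]

/-- `|α| = α₁ + ⋯ + αₙ`. -/
def deg (α : MultiIndex n) : ℕ := α.sum fun _ v => v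

/-- `α! = α₁! ⋯ αₙ!`. -/
def mfact (α : MultiIndex n) : ℕ := α.prod fun _ v => v.factorial

/-- The multinomial coefficient `C(α,β) = α!/(β!(α−β)!) = ∏ᵢ C(αᵢ,βᵢ)`. -/
def mchoose (α β : MultiIndex n) : ℕ := ∏ i ∈ α.support ∪ β.support, (α i).choose (β i)

/-- A "matrix" indexed by pairs of multi-indices (row index first). A matrix in
`M(p',p;R)` is such a function supported on rows of degree `p'` and columns of degree `p`. -/
abbrev Mat (n : ℕ) (R : Type*) := MultiIndex n → MultiIndex n → R

/-- `A` belongs to `M(p',p;R)`: supported on rows `α'` with `|α'| = p'` and columns `α`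
with `|α| = p`. -/
def IsHom (p' p : ℕ) (A : Mat n R) : Prop :=
  ∀ α' α, A α' α ≠ 0 → deg α' = p' ∧ deg α = p

/-- The symmetric product
`(A ⊙ B)^{α'}_α = ∑_{β' ≪ α', β ≪ α} C(α,β) A^{β'}_β B^{α'−β'}_{α−β}`.
For `A ∈ M(p',p;R)` and `B ∈ M(q',q;R)` this agrees with Bekbaev's Definition 1
(the degree restrictions on `β, β'` hold automatically on the support of `A`). -/
noncomputable def odot (A B : Mat n R) : Mat n R := fun α' α =>
  ∑ β' ∈ Finset.Iic α', ∑ β ∈ Finset.Iic α,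
    (mchoose α β : R) * A β' β * B (α' - β') (α - β)

/-- The identity element `1 ∈ Mat(R)`: the `(0,0)` block is `1`. -/
def matOne : Mat n R := fun α' α => if α' = 0 ∧ α = 0 then 1 else 0

/-- `A^{⊙m}`, the `m`-th symmetric power. -/
noncomputable def sympow (A : Mat n R) : ℕ → Mat n R
  | 0 => matOne
  | m + 1 => odot (sympow A m) A

/-- The row vector `h = (h₁,…,hₙ) ∈ M(0,1;R)` attached to `h : Fin n → R`. -/
noncomputable def rowVec (h : Fin n → R) : Mat n R := fun α' α =>
  if α' = 0 then ∑ j : Fin n, (if α = Finsupp.single j 1 then h j else 0) else 0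

/-- Multi-indices of degree `w` (a finite set). -/
noncomputable def degSet (n w : ℕ) : Finset (MultiIndex n) :=
  (Finset.Iic (Finsupp.equivFunOnFinite.symm fun _ : Fin n => w)).filter fun β => deg β = w

/-- Ordinary matrix product of `v ∈ M(0,w;R)` with `A ∈ M(p',w;R)`, contracting the
weight-`w` index (the columns of `A`, via transposition): the result, in `M(0,p';R)`,
has entries `(v·A)^{α'}_α = ∑_{|β| = w} v^{α'}_β A^{α}_β`. -/
noncomputable def vecMul (w : ℕ) (v A : Mat n R) : Mat n R := fun α' α =>
  ∑ β ∈ degSet n w, v α' β * A α β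

end SymProd

namespace SymProd

variable {n : ℕ} {F : Type*} [Field F]

/-- The constant multi-index `(d,…,d)`. -/
noncomputable def constM (n d : ℕ) : MultiIndex n := Finsupp.equivFunOnFinite.symm fun _ => d

/-- Composition: substitution of the `n`-tuple `φ` (each with zero constant term) into the
multivariate power series `f`, i.e. `f(φ(x))`; the coefficient of `x^α` only receives
contributions from monomials `x^β` of `f` with `|β| ≤ |α|`. -/
noncomputable def mvComp (φ : Fin n → MvPowerSeries (Fin n) F)
    (f : MvPowerSeries (Fin n) F) : MvPowerSeries (Fin n) F := fun α =>
  ∑ β ∈ Finset.Iic (constM n (deg α)),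
    MvPowerSeries.coeff β f * MvPowerSeries.coeff α (∏ j : Fin n, φ j ^ β j)

/-- `m`-fold compositional iterate `φ^{∘m}` of a power series map, `φ^{∘0} = id`. -/
noncomputable def mvIter (φ : Fin n → MvPowerSeries (Fin n) F) :
    ℕ → Fin n → MvPowerSeries (Fin n) F
  | 0 => fun j => MvPowerSeries.X j
  | m + 1 => fun j => mvComp φ (mvIter φ m j)

/-- The matrix `M_φ ∈ Mat(F)` of a power series map `φ : Fⁿ → Fⁿ`: supported on the
column blocks `p = 1`, with `(M_φ)^{α'}_{e_j} = ` the coefficient of `x^{α'}` in `φ_j`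
(from the expansion `φ(x) = ∑_i (x^{⊙i}/i!) M^i_1`). -/
noncomputable def matOf (φ : Fin n → MvPowerSeries (Fin n) F) : Mat n F := fun α' α =>
  ∑ j : Fin n, if α = Finsupp.single j 1 then MvPowerSeries.coeff α' (φ j) else 0

/-- Ordinary (block) matrix product on `Mat(F)`; the contraction is truncated to
column-degrees `≤ deg α'`, which is the full product whenever the left factor `A`
satisfies `A α' β = 0` for `deg β > deg α'` (as is the case for `e^{⊙M_φ}` with
`φ(0) = 0`). -/
noncomputable def matMul (A B : Mat n F) : Mat n F := fun α' α =>
  ∑ β ∈ Finset.Iic (constM n (deg α')), A α' β * B β α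

/-- `E_1`: identity in the `(1,1)` block, zero elsewhere. -/
def E1 : Mat n F := fun α' α => if α' = α ∧ deg α = 1 then 1 else 0

/-- `E_∞`: the (infinite) identity matrix of `Mat(F)`. -/
def Einf : Mat n F := fun α' α => if α' = α then 1 else 0

/-- Powers with respect to ordinary matrix multiplication. -/
noncomputable def matPow (A : Mat n F) : ℕ → Mat n F
  | 0 => Einf
  | m + 1 => matMul A (matPow A m)

/-- `e^{⊙A} = ∑_i A^{⊙i}/i!`; the sum is truncated blockwise at `i = deg α'`, which is
the full sum whenever `A^{⊙i}` has vanishing `(deg α', ·)` blocks for `i > deg α'`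
(as is the case for `A = M_φ` with `M_φ(0,1) = 0`). -/
noncomputable def expOdot (A : Mat n F) : Mat n F := fun α' α =>
  ∑ i ∈ Finset.range (deg α' + 1), (i.factorial : F)⁻¹ * sympow A i α' α

end SymProd

/-! For a matrix `M` supported on column-block `1` let `φ` be the tuple of its columns, read as
power series. By induction on `d`, the `α`-column of `M^{⊙d}` is `d! φ^α` when `|α| = d` and
zero otherwise, so the `(α', α)` entry of `e^{⊙M}` is the coefficient of `x^{α'}` in `φ^α`.
Since substituting `φ` (with `φ(0) = 0`) is a ring homomorphism, this gives
`e^{⊙M_φ} M_ψ = M_{ψ∘φ}` and `e^{⊙M_{ψ∘φ}} = e^{⊙M_φ} e^{⊙M_ψ}`. The identity is then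
associativity of the truncated matrix product, which holds because both exponentials vanish on
entries `(α', α)` with `|α'| < |α|`. -/

namespace SymProd

open MvPowerSeries Finset

variable {n : ℕ}

section MultiIndex

lemma deg_eq_degree (α : MultiIndex n) : deg α = α.degree := rfl

lemma mem_Iic_constM {β : MultiIndex n} {w : ℕ} : β ∈ Iic (constM n w) ↔ ∀ i, β i ≤ w := by
  rw [mem_Iic, Finsupp.le_def]
  rfl

lemma mem_Iic_constM_of_deg_le {β : MultiIndex n} {w : ℕ} (h : deg β ≤ w) :
    β ∈ Iic (constM n w) :=
  mem_Iic_constM.2 fun i => (Finsupp.le_degree i β).trans h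

lemma lt_deg_of_notMem_Iic_constM {β : MultiIndex n} {w : ℕ} (h : β ∉ Iic (constM n w)) :
    w < deg β :=
  lt_of_not_ge fun hle => h (mem_Iic_constM_of_deg_le hle)

lemma Iic_constM_mono {v w : ℕ} (h : v ≤ w) : Iic (constM n v) ⊆ Iic (constM n w) :=
  Iic_subset_Iic.2 (Finsupp.le_def.2 fun _ => h)

lemma deg_sub_single_add_one {α : MultiIndex n} {j : Fin n} (h : α j ≠ 0) :
    deg (α - Finsupp.single j 1) + 1 = deg α := by
  conv_rhs => rw [← tsub_add_cancel_of_le (Finsupp.single_le_iff.2 (Nat.one_le_iff_ne_zero.2 h))]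
  rw [deg_eq_degree, deg_eq_degree, map_add, Finsupp.degree_single]

lemma prod_pow_sub_single_mul {ι M : Type*} [Fintype ι] [DecidableEq ι] [CommMonoid M]
    (f : ι → M) {α : ι →₀ ℕ} {j : ι} (h : α j ≠ 0) :
    (∏ i, f i ^ (α - Finsupp.single j 1 : ι →₀ ℕ) i) * f j = ∏ i, f i ^ α i := by
  conv_rhs => rw [← tsub_add_cancel_of_le (Finsupp.single_le_iff.2 (Nat.one_le_iff_ne_zero.2 h))]
  simp only [Finsupp.add_apply, pow_add, prod_mul_distrib]
  congr 1
  simp [Finsupp.single_apply]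

lemma mchoose_sub_single {α : MultiIndex n} {j : Fin n} (h : 1 ≤ α j) :
    mchoose α (α - Finsupp.single j 1) = α j := by
  have hj : j ∈ α.support ∪ (α - Finsupp.single j 1).support := by simp; omega
  rw [mchoose, prod_eq_single_of_mem j hj fun i _ hij => ?_]
  · simp [Nat.choose_symm h]
  · simp [Ne.symm hij]

lemma sum_Iic_ite_sub_eq_single {R : Type*} [CommSemiring R] (α : MultiIndex n) (j : Fin n)
    (g : MultiIndex n → R) :
    ∑ β ∈ Iic α, (if α - β = Finsupp.single j 1 then (mchoose α β : R) * g β else 0) =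
      α j * g (α - Finsupp.single j 1) := by
  by_cases hj : 1 ≤ α j
  · have hle : Finsupp.single j 1 ≤ α := Finsupp.single_le_iff.2 hj
    rw [sum_eq_single_of_mem (α - Finsupp.single j 1) (mem_Iic.2 tsub_le_self),
      if_pos (tsub_tsub_cancel_of_le hle), mchoose_sub_single hj]
    intro β hβ hne
    refine if_neg fun h => hne ?_
    rw [← h, tsub_tsub_cancel_of_le (mem_Iic.1 hβ)]
  · rw [show α j = 0 by omega, Nat.cast_zero, zero_mul]
    refine sum_eq_zero fun β _ => if_neg fun h => hj ?_
    simpa using (Finsupp.ext_iff.1 h j).symm.trans_le (tsub_le_self : α j - β j ≤ α j)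

end MultiIndex

section PowerSeries

variable {R : Type*} [CommSemiring R] {F : Type*} [Field F]

lemma coeff_mul_eq_sum_Iic (f g : MvPowerSeries (Fin n) R) (α : MultiIndex n) :
    coeff α (f * g) = ∑ β ∈ Iic α, coeff β f * coeff (α - β) g := by
  rw [coeff_mul]
  refine sum_nbij' Prod.fst (fun β => (β, α - β)) ?_ ?_ ?_ (fun _ _ => rfl) ?_
  · rintro ⟨a, b⟩ h
    simp only [HasAntidiagonal.mem_antidiagonal] at h
    simp [← h]
  · intro β hβ
    simp only [HasAntidiagonal.mem_antidiagonal]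
    exact add_tsub_cancel_of_le (mem_Iic.1 hβ)
  all_goals
    rintro ⟨a, b⟩ h
    simp only [HasAntidiagonal.mem_antidiagonal] at h
    simp [← h]

lemma coeff_prod_pow_eq_zero {φ : Fin n → MvPowerSeries (Fin n) R}
    (hφ : ∀ j, constantCoeff (φ j) = 0) {α' β : MultiIndex n} (h : deg α' < deg β) :
    coeff α' (∏ j, φ j ^ β j) = 0 := by
  refine coeff_of_lt_order ?_
  calc (α'.degree : ℕ∞) < β.degree := by exact_mod_cast h
    _ = ∑ j, (β j : ℕ∞) := by rw [Finsupp.degree_eq_sum]; push_cast; rfl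
    _ ≤ ∑ j, (φ j ^ β j).order :=
      sum_le_sum fun j _ => le_order_pow_of_constantCoeff_eq_zero _ (hφ j)
    _ ≤ _ := le_order_prod _ _

lemma mvComp_eq_subst {φ : Fin n → MvPowerSeries (Fin n) F}
    (hφ : ∀ j, constantCoeff (φ j) = 0) (f : MvPowerSeries (Fin n) F) :
    mvComp φ f = subst φ f := by
  ext α'
  rw [coeff_subst (hasSubst_of_constantCoeff_zero hφ),
    finsum_eq_sum_of_support_subset _ (s := Iic (constM n (deg α'))) ?_]
  · simp only [Finsupp.prod_fintype, pow_zero, implies_true, smul_eq_mul]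
    rfl
  · intro β hβ
    by_contra h
    apply hβ
    simp [Finsupp.prod_fintype, coeff_prod_pow_eq_zero hφ (lt_deg_of_notMem_Iic_constM h)]

lemma mvComp_prod_pow {φ : Fin n → MvPowerSeries (Fin n) F}
    (hφ : ∀ j, constantCoeff (φ j) = 0) (ψ : Fin n → MvPowerSeries (Fin n) F)
    (γ : MultiIndex n) : mvComp φ (∏ j, ψ j ^ γ j) = ∏ j, mvComp φ (ψ j) ^ γ j := by
  simp only [mvComp_eq_subst hφ, ← coe_substAlgHom (hasSubst_of_constantCoeff_zero hφ),
    map_prod, map_pow]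

lemma constantCoeff_mvComp {φ : Fin n → MvPowerSeries (Fin n) F}
    (hφ : ∀ j, constantCoeff (φ j) = 0) {f : MvPowerSeries (Fin n) F}
    (hf : constantCoeff f = 0) : constantCoeff (mvComp φ f) = 0 := by
  rw [mvComp_eq_subst hφ]
  exact constantCoeff_subst_eq_zero (hasSubst_of_constantCoeff_zero hφ) hφ hf

end PowerSeries

section Matrices

variable {F : Type*} [Field F]

def colSeries (X : Mat n F) (γ : MultiIndex n) : MvPowerSeries (Fin n) F := fun β' => X β' γ

lemma coeff_colSeries (X : Mat n F) (γ β' : MultiIndex n) : coeff β' (colSeries X γ) = X β' γ :=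
  rfl

lemma constantCoeff_colSeries (X : Mat n F) (γ : MultiIndex n) :
    constantCoeff (colSeries X γ) = X 0 γ :=
  rfl

lemma matOf_colSeries {M : Mat n F} (hcol : ∀ α' α, M α' α ≠ 0 → deg α = 1) :
    matOf (fun j => colSeries M (Finsupp.single j 1)) = M := by
  funext α' α
  by_cases hα : deg α = 1
  · obtain ⟨j, rfl⟩ := (Finsupp.sum_eq_one_iff α).1 hα
    simp [matOf, coeff_colSeries, Finsupp.single_left_inj one_ne_zero]
  · rw [not_imp_comm.1 (hcol α' α) hα]
    refine sum_eq_zero fun j _ => if_neg ?_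
    rintro rfl
    exact hα (Finsupp.degree_single j 1)

lemma colSeries_odot_matOf (X : Mat n F) (φ : Fin n → MvPowerSeries (Fin n) F)
    (α : MultiIndex n) :
    colSeries (odot X (matOf φ)) α =
      ∑ j, (α j : F) • (colSeries X (α - Finsupp.single j 1) * φ j) := by
  ext α'
  simp only [map_sum, coeff_smul, coeff_mul_eq_sum_Iic, coeff_colSeries, mul_sum]
  rw [sum_comm]
  refine sum_congr rfl fun β' _ => ?_
  simp only [matOf, mul_sum]
  rw [sum_comm]
  refine sum_congr rfl fun j _ => ?_
  rw [← sum_Iic_ite_sub_eq_single α j fun β => X β' β * coeff (α' - β') (φ j)]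
  refine sum_congr rfl fun β _ => ?_
  split_ifs <;> ring

lemma colSeries_sympow_matOf (φ : Fin n → MvPowerSeries (Fin n) F) (d : ℕ) (α : MultiIndex n) :
    colSeries (sympow (matOf φ) d) α =
      if deg α = d then (d.factorial : F) • ∏ j, φ j ^ α j else 0 := by
  induction d generalizing α with
  | zero =>
    ext α'
    by_cases hα : α = 0
    · subst hα
      simp [sympow, matOne, coeff_colSeries, coeff_one, deg_eq_degree]
    · simp [sympow, matOne, coeff_colSeries, deg_eq_degree, Finsupp.degree_eq_zero_iff, hα]
  | succ m ih =>
    have hterm : ∀ j,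
        (α j : F) • (colSeries (sympow (matOf φ) m) (α - Finsupp.single j 1) * φ j) =
          if deg α = m + 1 then ((α j : F) * m.factorial) • ∏ i, φ i ^ α i else 0 := by
      intro j
      by_cases hj : α j = 0
      · simp [hj]
      have hd := deg_sub_single_add_one hj
      rw [ih]
      by_cases hα : deg α = m + 1
      · rw [if_pos (by omega), if_pos hα, smul_mul_assoc, prod_pow_sub_single_mul φ hj, smul_smul]
      · rw [if_neg (by omega), if_neg hα, zero_mul, smul_zero]
    rw [sympow, colSeries_odot_matOf, sum_congr rfl fun j _ => hterm j]
    split_ifs with hα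
    · rw [← sum_smul, ← sum_mul, ← Nat.cast_sum, ← Finsupp.degree_eq_sum, ← deg_eq_degree, hα,
        Nat.factorial_succ, Nat.cast_mul]
    · exact sum_const_zero

lemma matMul_assoc_of_deg_lt {A B : Mat n F} (C : Mat n F)
    (hA : ∀ α' β, deg α' < deg β → A α' β = 0) (hB : ∀ β' β, deg β' < deg β → B β' β = 0) :
    matMul A (matMul B C) = matMul (matMul A B) C := by
  funext α' α
  have hrow : ∀ β ∈ Iic (constM n (deg α')), A α' β * matMul B C β α =
      ∑ γ ∈ Iic (constM n (deg α')), A α' β * (B β γ * C γ α) := by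
    intro β _
    rcases le_or_gt (deg β) (deg α') with hβ | hβ
    · rw [← mul_sum]
      congr 1
      refine sum_subset (Iic_constM_mono hβ) fun γ _ hγ => ?_
      rw [hB β γ (lt_deg_of_notMem_Iic_constM hγ), zero_mul]
    · simp [hA α' β hβ]
  unfold matMul at hrow ⊢
  rw [sum_congr rfl hrow, sum_comm]
  simp only [sum_mul, mul_assoc]

variable [CharZero F]

lemma expOdot_matOf {φ : Fin n → MvPowerSeries (Fin n) F} (hφ : ∀ j, constantCoeff (φ j) = 0)
    (α' α : MultiIndex n) : expOdot (matOf φ) α' α = coeff α' (∏ j, φ j ^ α j) := by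
  have hterm : ∀ i, (i.factorial : F)⁻¹ * sympow (matOf φ) i α' α =
      if deg α = i then coeff α' (∏ j, φ j ^ α j) else 0 := by
    intro i
    rw [← coeff_colSeries (sympow (matOf φ) i) α α', colSeries_sympow_matOf]
    split_ifs
    · rw [coeff_smul, inv_mul_cancel_left₀ (by exact_mod_cast i.factorial_ne_zero)]
    · rw [map_zero, mul_zero]
  rw [expOdot, sum_congr rfl fun i _ => hterm i, sum_ite_eq]
  split_ifs with h
  · rfl
  · rw [mem_range, Nat.lt_succ_iff, not_le] at h
    exact (coeff_prod_pow_eq_zero hφ h).symm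

lemma expOdot_matOf_eq_zero_of_deg_lt {φ : Fin n → MvPowerSeries (Fin n) F}
    (hφ : ∀ j, constantCoeff (φ j) = 0) {α' α : MultiIndex n} (h : deg α' < deg α) :
    expOdot (matOf φ) α' α = 0 := by
  rw [expOdot_matOf hφ, coeff_prod_pow_eq_zero hφ h]

lemma matMul_expOdot_matOf {φ : Fin n → MvPowerSeries (Fin n) F}
    (hφ : ∀ j, constantCoeff (φ j) = 0) (ψ : Fin n → MvPowerSeries (Fin n) F) :
    matMul (expOdot (matOf φ)) (matOf ψ) = matOf fun j => mvComp φ (ψ j) := by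
  funext α' α
  simp only [matMul, matOf, expOdot_matOf hφ, mul_sum]
  rw [sum_comm]
  refine sum_congr rfl fun j _ => ?_
  split_ifs
  · exact sum_congr rfl fun β _ => mul_comm _ _
  · simp

lemma expOdot_matOf_mvComp {φ ψ : Fin n → MvPowerSeries (Fin n) F}
    (hφ : ∀ j, constantCoeff (φ j) = 0) (hψ : ∀ j, constantCoeff (ψ j) = 0) :
    expOdot (matOf fun j => mvComp φ (ψ j)) =
      matMul (expOdot (matOf φ)) (expOdot (matOf ψ)) := by
  funext α' γ
  rw [expOdot_matOf fun j => constantCoeff_mvComp hφ (hψ j), ← mvComp_prod_pow hφ]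
  simp only [matMul, expOdot_matOf hφ, expOdot_matOf hψ]
  exact sum_congr rfl fun β _ => mul_comm _ _

end Matrices

end SymProd

open SymProd in
theorem expOdot_assoc_general {n : ℕ} (F : Type*) [Field F] [CharZero F]
    (Mφ Mψ Mξ : Mat n F)
    (hφcol : ∀ α' α, Mφ α' α ≠ 0 → deg α = 1) (hφ0 : ∀ α, Mφ 0 α = 0)
    (hψcol : ∀ α' α, Mψ α' α ≠ 0 → deg α = 1) (hψ0 : ∀ α, Mψ 0 α = 0) :
    matMul (expOdot Mφ) (matMul (expOdot Mψ) Mξ) =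
      matMul (expOdot (matMul (expOdot Mφ) Mψ)) Mξ := by
  have hφ : ∀ j, MvPowerSeries.constantCoeff (colSeries Mφ (Finsupp.single j 1)) = 0 :=
    fun j => (constantCoeff_colSeries Mφ _).trans (hφ0 _)
  have hψ : ∀ j, MvPowerSeries.constantCoeff (colSeries Mψ (Finsupp.single j 1)) = 0 :=
    fun j => (constantCoeff_colSeries Mψ _).trans (hψ0 _)
  rw [← matOf_colSeries hφcol, ← matOf_colSeries hψcol, matMul_expOdot_matOf hφ,
    expOdot_matOf_mvComp hφ hψ]
  exact matMul_assoc_of_deg_lt Mξ (fun _ _ => expOdot_matOf_eq_zero_of_deg_lt hφ)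
    (fun _ _ => expOdot_matOf_eq_zero_of_deg_lt hψ)

open SymProd in
/-- mixed associativity: for matrices `M_φ, M_ψ, M_ξ` of power series
maps with zero constant terms (supported on column-block `1`, with vanishing `(0,1)`
block), `e^{⊙M_φ}(e^{⊙M_ψ} M_ξ) = e^{⊙(e^{⊙M_φ} M_ψ)} M_ξ`. -/
theorem expOdot_assoc {n : ℕ} (F : Type*) [Field F] [CharZero F]
    (Mφ Mψ Mξ : Mat n F)
    (hφcol : ∀ α' α, Mφ α' α ≠ 0 → deg α = 1) (hφ0 : ∀ α, Mφ 0 α = 0)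
    (hψcol : ∀ α' α, Mψ α' α ≠ 0 → deg α = 1) (hψ0 : ∀ α, Mψ 0 α = 0)
    (hξcol : ∀ α' α, Mξ α' α ≠ 0 → deg α = 1) (hξ0 : ∀ α, Mξ 0 α = 0) :
    matMul (expOdot Mφ) (matMul (expOdot Mψ) Mξ) =
      matMul (expOdot (matMul (expOdot Mφ) Mψ)) Mξ :=
  expOdot_assoc_general F Mφ Mψ Mξ hφcol hφ0 hψcol hψ0
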